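/- Let G_ν be the n-dimensional heat kernel and ∂_i G_ν its i-th spatial derivative. For every μ ∈ (1/2, 1) there exists C' > 0 such that |∂_i G_ν(t, x)| ≤ C'/((νt)^μ |x|^{n+1-2μ}) for all t > 0, x ≠ 0; and for μ ∈ (1/2, 1) the bound (t^μ|x|^{n+1-2μ})^{-1} is locally integrable on (0,1) × B₁(0). -/

import Mathlib

/-!
With `s = νt`, `r = ‖x‖` and `u = r² / (4s)`, the product `s^μ r^(n+1-2μ) · (r / (2s)) G_ν(t, x)`
is a constant times `u^a e^(-u)` with `a = n/2 + 1 - μ > 0`, and `u^a e^(-u) ≤ a^a e^(-a)`;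
as `|x_i| ≤ r` this gives the pointwise bound. The weight `(t^μ ‖x‖^(n+1-2μ))⁻¹` is the product of
`t^(-μ)`, integrable near `0` because `μ < 1`, and `‖x‖^(-(n+1-2μ))`, integrable near `0 ∈ ℝⁿ`
because `n + 1 - 2μ < n`, i.e. `μ > 1/2`.
-/

open Real MeasureTheory Set Metric

lemma rpow_mul_exp_neg_le {a u : ℝ} (ha : 0 < a) (hu : 0 ≤ u) :
    u ^ a * exp (-u) ≤ a ^ a * exp (-a) := by
  have hua : u / a ≤ exp (u / a - 1) := by linarith [add_one_le_exp (u / a - 1)]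
  have hpow : u ^ a ≤ a ^ a * exp (u - a) := calc
    u ^ a = a ^ a * (u / a) ^ a := by
      rw [← mul_rpow ha.le (by positivity), mul_div_cancel₀ _ ha.ne']
    _ ≤ a ^ a * exp (u / a - 1) ^ a := by gcongr
    _ = a ^ a * exp (u - a) := by
      rw [← exp_mul]; congr 2; field_simp
  calc u ^ a * exp (-u) ≤ a ^ a * exp (u - a) * exp (-u) := by gcongr
    _ = a ^ a * exp (-a) := by rw [mul_assoc, ← exp_add]; ring_nf

lemma gaussian_prefactor_mul_rpow_eq (d μ : ℝ) {s r : ℝ} (hs : 0 < s) (hr : 0 < r) :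
    r / (2 * s) * (4 * π * s) ^ (-d / 2) * (s ^ μ * r ^ (d + 1 - 2 * μ)) =
      2⁻¹ * (4 * π) ^ (-d / 2) * 4 ^ (d / 2 + 1 - μ) * (r ^ 2 / (4 * s)) ^ (d / 2 + 1 - μ) := by
  set a := d / 2 + 1 - μ
  have hr2a : (r ^ 2) ^ a = r ^ (d + 1 - 2 * μ) * r := by
    rw [← rpow_natCast, ← rpow_mul hr.le, ← rpow_add_one hr.ne']
    congr 1; simp only [a]; push_cast; ring
  have hsa : s ^ (-d / 2) * s ^ μ * s ^ a = s := by
    rw [← rpow_add hs, ← rpow_add hs]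
    convert rpow_one s using 2; simp only [a]; ring
  rw [mul_rpow (by positivity) hs.le, div_rpow (by positivity) (by positivity),
    mul_rpow (by norm_num) hs.le, hr2a]
  field_simp
  rwa [neg_div] at hsa

lemma exists_radial_heatKernel_deriv_le {d μ : ℝ} (hμ : μ < d / 2 + 1) :
    ∃ C > 0, ∀ s r : ℝ, 0 < s → 0 < r →
      r / (2 * s) * ((4 * π * s) ^ (-d / 2) * exp (-r ^ 2 / (4 * s))) ≤
        C / (s ^ μ * r ^ (d + 1 - 2 * μ)) := by
  set a := d / 2 + 1 - μ
  have ha : 0 < a := by simp only [a]; linarith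
  refine ⟨2⁻¹ * (4 * π) ^ (-d / 2) * 4 ^ a * (a ^ a * exp (-a)), by positivity,
    fun s r hs hr => ?_⟩
  set u := r ^ 2 / (4 * s)
  rw [le_div_iff₀ (by positivity), show -r ^ 2 / (4 * s) = -u by simp only [u]; ring,
    show ∀ p q g e : ℝ, p * (g * e) * q = p * g * q * e by intros; ring,
    gaussian_prefactor_mul_rpow_eq d μ hs hr, mul_assoc]
  exact mul_le_mul_of_nonneg_left (rpow_mul_exp_neg_le ha (by positivity)) (by positivity)

noncomputable def heatKernel (n : ℕ) (ν t : ℝ) (x : EuclideanSpace ℝ (Fin n)) : ℝ :=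
  (4 * π * ν * t) ^ (-(n : ℝ) / 2) * exp (-‖x‖ ^ 2 / (4 * ν * t))

lemma exists_abs_heatKernel_partialDeriv_le {n : ℕ} {ν μ : ℝ} (hν : 0 < ν) (i : Fin n)
    (hμ : μ < n / 2 + 1) :
    ∃ C > 0, ∀ t > 0, ∀ x : EuclideanSpace ℝ (Fin n), x ≠ 0 →
      |-x i / (2 * ν * t) * heatKernel n ν t x| ≤
        C / ((ν * t) ^ μ * ‖x‖ ^ ((n : ℝ) + 1 - 2 * μ)) := by
  obtain ⟨C, hC, hbound⟩ := exists_radial_heatKernel_deriv_le hμ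
  refine ⟨C, hC, fun t ht x hx => ?_⟩
  have hs : 0 < ν * t := by positivity
  have hG : 0 < heatKernel n ν t x := by unfold heatKernel; positivity
  calc |-x i / (2 * ν * t) * heatKernel n ν t x|
      = |x i| / (2 * (ν * t)) * heatKernel n ν t x := by
        rw [abs_mul, abs_div, abs_neg, abs_of_pos (by positivity : 0 < 2 * ν * t),
          abs_of_pos hG, mul_assoc 2]
    _ ≤ ‖x‖ / (2 * (ν * t)) * heatKernel n ν t x := by
        gcongr
        exact PiLp.norm_apply_le x i
    _ ≤ C / ((ν * t) ^ μ * ‖x‖ ^ ((n : ℝ) + 1 - 2 * μ)) := by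
        simpa only [heatKernel, mul_assoc] using hbound (ν * t) ‖x‖ hs (norm_pos_iff.2 hx)

lemma integrableOn_Ioo_inv_rpow {μ T : ℝ} (hμ : μ < 1) :
    IntegrableOn (fun t : ℝ => (t ^ μ)⁻¹) (Ioo 0 T) := by
  rcases le_or_gt T 0 with hT | hT
  · simp [Ioo_eq_empty_of_le hT]
  refine ((intervalIntegral.integrableOn_Ioo_rpow_iff hT).2 (by linarith : -1 < -μ)).congr_fun
    (fun t ht => ?_) measurableSet_Ioo
  exact rpow_neg ht.1.le μ

lemma integrableOn_ball_inv_norm_rpow {E : Type*} [NormedAddCommGroup E] [NormedSpace ℝ E]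
    [FiniteDimensional ℝ E] [MeasurableSpace E] [BorelSpace E] {μ : Measure E}
    [μ.IsAddHaarMeasure] (hd : 1 ≤ Module.finrank ℝ E) {b R : ℝ}
    (hb : b < Module.finrank ℝ E) :
    IntegrableOn (fun y : E => (‖y‖ ^ b)⁻¹) (ball 0 R) μ :=
  integrableOn_ball_of_norm_le_rpow (C := 1) hd hb
    (ae_of_all _ fun y => by
      rw [one_mul, ← rpow_neg (norm_nonneg y), norm_of_nonneg (by positivity)])
    (Measurable.aestronglyMeasurable (by fun_prop))

lemma integrableOn_Ioo_prod_ball_inv_rpow_mul_norm_rpow {E : Type*} [NormedAddCommGroup E]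
    [NormedSpace ℝ E] [FiniteDimensional ℝ E] [MeasureSpace E] [BorelSpace E]
    [(volume : Measure E).IsAddHaarMeasure] (hd : 1 ≤ Module.finrank ℝ E) {μ b T R : ℝ}
    (hμ : μ < 1) (hb : b < Module.finrank ℝ E) :
    IntegrableOn (fun p : ℝ × E => (p.1 ^ μ * ‖p.2‖ ^ b)⁻¹) (Ioo 0 T ×ˢ ball 0 R) := by
  rw [IntegrableOn, Measure.volume_eq_prod, ← Measure.prod_restrict]
  simpa only [mul_inv] using
    (integrableOn_Ioo_inv_rpow hμ).mul_prod (integrableOn_ball_inv_norm_rpow hd hb)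

theorem heat_kernel_derivative_bound (n : ℕ) (hn : 1 ≤ n) (ν : ℝ) (hν : 0 < ν)
    (i : Fin n) (μ : ℝ) (hμ : μ ∈ Set.Ioo (1/2 : ℝ) 1) :
    (∃ C' : ℝ, 0 < C' ∧
      ∀ t : ℝ, 0 < t → ∀ x : EuclideanSpace ℝ (Fin n), x ≠ 0 →
        |(-(x i) / (2*ν*t)) * ((4*π*ν*t) ^ (-(n:ℝ)/2) * Real.exp (-‖x‖^2 / (4*ν*t)))|
          ≤ C' / ((ν*t)^μ * ‖x‖^((n:ℝ) + 1 - 2*μ))) ∧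
    MeasureTheory.IntegrableOn
      (fun p : ℝ × EuclideanSpace ℝ (Fin n) => (p.1^μ * ‖p.2‖^((n:ℝ) + 1 - 2*μ))⁻¹)
      (Set.Ioo (0:ℝ) 1 ×ˢ Metric.ball (0 : EuclideanSpace ℝ (Fin n)) 1) := by
  obtain ⟨hμ_half, hμ_one⟩ := hμ
  have hn_nonneg : (0 : ℝ) ≤ n := n.cast_nonneg
  refine ⟨exists_abs_heatKernel_partialDeriv_le hν i (by linarith), ?_⟩
  apply integrableOn_Ioo_prod_ball_inv_rpow_mul_norm_rpow (by simpa using hn) hμ_one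
  simp only [finrank_euclideanSpace, Fintype.card_fin]
  linarith
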